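/- arXiv:1612.07904 — 3 statements merged into one kernel-verified Lean document; each statement's English description precedes it below -/
import Mathlib

section
/- Let X be a finite n-dimensional simplicial complex satisfying (⋆) with the weight w(s) = number of n-simplices containing s. For any f ∈ C^i(X), i · (Δf, f) = Σ_{v ∈ Ver(X)} (Δρ_v f, ρ_v f) − (n−i)(f, f), where ρ_v f is the restriction of f to simplices containing v (extended by zero). -/
open Finset
open scoped Classical

noncomputable section

variable {V : Type*} [Fintype V] [DecidableEq V]

/-- A finite abstract simplicial complex on the vertex set `V`:
a collection of nonempty finite sets closed under nonempty subsets. -/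
def IsComplex (K : Finset (Finset V)) : Prop :=
  ∀ s ∈ K, s.Nonempty ∧ ∀ t ⊆ s, t.Nonempty → t ∈ K

/-- The underlying vertex set of a tuple. -/
def tupImage {m : ℕ} (x : Fin m → V) : Finset V := Finset.image x Finset.univ

/-- `x` is (an ordering of) a simplex of `K`. -/
def IsSimplex (K : Finset (Finset V)) {m : ℕ} (x : Fin m → V) : Prop :=
  Function.Injective x ∧ tupImage x ∈ K

/-- An alternating real cochain supported on the simplices of `K`;
tuples have `m` entries, so this is the space `C^(m-1)(K)`. -/
def IsCochain (K : Finset (Finset V)) {m : ℕ} (f : (Fin m → V) → ℝ) : Prop :=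
  (∀ x, ¬ IsSimplex K x → f x = 0) ∧
  ∀ (x : Fin m → V) (π : Equiv.Perm (Fin m)),
    f (x ∘ π) = ((Equiv.Perm.sign π : ℤ) : ℝ) * f x

/-- The simplicial coboundary operator. -/
def dOp {m : ℕ} (f : (Fin m → V) → ℝ) : (Fin (m + 1) → V) → ℝ :=
  fun x => ∑ j : Fin (m + 1), (-1 : ℝ) ^ (j : ℕ) * f (x ∘ j.succAbove)

/-- The weighted inner product `(f,g) = ∑_{σ} w(σ) f(σ) g(σ)`, the sum being over
non-oriented simplices; it is realized as a sum over all tuples divided by `m!`. -/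
def oinner (w : Finset V → ℝ) {m : ℕ} (f g : (Fin m → V) → ℝ) : ℝ :=
  (∑ x : Fin m → V, w (tupImage x) * f x * g x) / (Nat.factorial m)

/-- The operator `δ`: `δf(s) = ∑_{v : [v,s] ∈ K} (w([v,s])/w(s)) f([v,s])`. -/
def deltaOp (K : Finset (Finset V)) (w : Finset V → ℝ) {m : ℕ}
    (f : (Fin (m + 1) → V) → ℝ) : (Fin m → V) → ℝ :=
  fun x => ∑ v : V,
    if IsSimplex K (Fin.cons v x) then
      (w (insert v (tupImage x)) / w (tupImage x)) * f (Fin.cons v x)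
    else 0

/-- Restriction of a function to the simplices of `K` (extension by zero). -/
def simpRestrict (K : Finset (Finset V)) {m : ℕ} (f : (Fin m → V) → ℝ) :
    (Fin m → V) → ℝ :=
  fun x => if IsSimplex K x then f x else 0

/-- The number of `n`-dimensional simplices of `K` containing `s`. -/
def wN (K : Finset (Finset V)) (n : ℕ) (s : Finset V) : ℕ :=
  (K.filter fun t => s ⊆ t ∧ t.card = n + 1).card

/-- Real-valued version of `wN`. -/
def wR (K : Finset (Finset V)) (n : ℕ) : Finset V → ℝ := fun s => (wN K n s : ℝ)

/-- Property `(⋆)`: every simplex of `K` is a face of some `n`-simplex. -/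
def StarProp (K : Finset (Finset V)) (n : ℕ) : Prop :=
  ∀ s ∈ K, ∃ t ∈ K, s ⊆ t ∧ t.card = n + 1

/-- `X` has dimension (at most) `n`. -/
def DimLE (K : Finset (Finset V)) (n : ℕ) : Prop :=
  ∀ s ∈ K, s.card ≤ n + 1

/-- Restriction to the star of a vertex `v`. -/
def rhoOp (v : V) {m : ℕ} (f : (Fin m → V) → ℝ) : (Fin m → V) → ℝ :=
  fun x => if v ∈ tupImage x then f x else 0

/-- The link of a vertex. -/
def linkK (K : Finset (Finset V)) (v : V) : Finset (Finset V) :=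
  K.filter fun s => v ∉ s ∧ insert v s ∈ K

/-- The operator `τ_v`: `(τ_v f)(s) = f([v,s])` for `s` in the link of `v`, zero otherwise. -/
def tauOp (K : Finset (Finset V)) (v : V) {m : ℕ}
    (f : (Fin (m + 1) → V) → ℝ) : (Fin m → V) → ℝ :=
  fun x => if IsSimplex K (Fin.cons v x) then f (Fin.cons v x) else 0


/-! ### Auxiliary lemmas -/

lemma gar_val_sA {n : ℕ} (p : Fin (n+1)) (k : Fin n) :
    ((p.succAbove k : Fin (n+1)) : ℕ) = if (k:ℕ) < (p:ℕ) then (k:ℕ) else (k:ℕ)+1 := by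
  rcases lt_or_ge (Fin.castSucc k) p with h | h
  · rw [Fin.succAbove_of_castSucc_lt _ _ h, Fin.coe_castSucc,
      if_pos (by simpa [Fin.lt_iff_val_lt_val] using h)]
  · rw [Fin.succAbove_of_le_castSucc _ _ h, Fin.val_succ,
      if_neg (by simpa [Fin.le_iff_val_le_val, not_lt] using h)]

lemma gar_val_cycleRange {n : ℕ} (j l : Fin (n+1)) :
    ((Fin.cycleRange j l : Fin (n+1)) : ℕ) =
      if (l:ℕ) < (j:ℕ) then (l:ℕ)+1 else if (l:ℕ) = (j:ℕ) then 0 else (l:ℕ) := by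
  rcases lt_trichotomy l j with h | h | h
  · rw [Fin.coe_cycleRange_of_lt h, if_pos (by exact h)]
  · subst h; rw [Fin.cycleRange_self]; simp
  · rw [Fin.cycleRange_of_gt h]
    have h1 : ¬ (l:ℕ) < (j:ℕ) := not_lt.2 (le_of_lt h)
    have h2 : ¬ (l:ℕ) = (j:ℕ) := fun he => absurd (Fin.ext he) (ne_of_gt h)
    rw [if_neg h1, if_neg h2]

lemma gar_comp_self {n : ℕ} (j : Fin (n+2)) :
    (⇑(Fin.cycleRange j)) ∘ j.succAbove = Fin.succ := by
  funext m
  apply Fin.ext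
  have hm := m.isLt; have hj := j.isLt
  simp only [Function.comp_apply, Fin.val_succ]
  rw [gar_val_cycleRange, gar_val_sA]
  split_ifs <;> omega

lemma gar_comp_lt {n : ℕ} (j l : Fin (n+2)) (h : (l:ℕ) < (j:ℕ)) :
    (⇑(Fin.cycleRange j)) ∘ l.succAbove =
      (Fin.cycleRange j l).succAbove ∘ ⇑(Fin.cycleRange (⟨(j:ℕ)-1, by omega⟩ : Fin (n+1))) := by
  funext m
  apply Fin.ext
  have hm := m.isLt; have hj := j.isLt; have hl := l.isLt
  simp only [Function.comp_apply]
  rw [gar_val_cycleRange, gar_val_sA, gar_val_sA, gar_val_cycleRange, gar_val_cycleRange]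
  simp only [Fin.val_mk]
  split_ifs <;> omega

lemma gar_comp_gt {n : ℕ} (j l : Fin (n+2)) (h : (j:ℕ) < (l:ℕ)) :
    (⇑(Fin.cycleRange j)) ∘ l.succAbove =
      l.succAbove ∘ ⇑(Fin.cycleRange (⟨(j:ℕ), by omega⟩ : Fin (n+1))) := by
  funext m
  apply Fin.ext
  have hm := m.isLt; have hj := j.isLt; have hl := l.isLt
  simp only [Function.comp_apply]
  rw [gar_val_cycleRange, gar_val_sA, gar_val_sA, gar_val_cycleRange]
  simp only [Fin.val_mk]
  split_ifs <;> omega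

lemma gar_mem_tupImage {m : ℕ} {x : Fin m → V} {u : V} :
    u ∈ tupImage x ↔ ∃ k, x k = u := by
  simp [tupImage]

lemma gar_tupImage_comp_perm {m : ℕ} (x : Fin m → V) (π : Equiv.Perm (Fin m)) :
    tupImage (x ∘ ⇑π) = tupImage x := by
  ext u
  simp only [gar_mem_tupImage, Function.comp_apply]
  constructor
  · rintro ⟨k, hk⟩; exact ⟨π k, hk⟩
  · rintro ⟨k, hk⟩; exact ⟨π.symm k, by simpa using hk⟩

lemma gar_inj_comp_perm {m : ℕ} (x : Fin m → V) (π : Equiv.Perm (Fin m)) :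
    Function.Injective (x ∘ ⇑π) ↔ Function.Injective x :=
  Equiv.injective_comp π x

lemma gar_comp_perm_bijective {m : ℕ} (π : Equiv.Perm (Fin m)) :
    Function.Bijective (fun y : Fin m → V => y ∘ ⇑π) := by
  constructor
  · intro a b h
    funext k
    have := congrFun h (π.symm k)
    simpa using this
  · intro z
    exact ⟨z ∘ ⇑π.symm, by funext k; simp⟩

lemma gar_alt_zero {m : ℕ} {f : (Fin m → V) → ℝ}
    (halt : ∀ (x : Fin m → V) (π : Equiv.Perm (Fin m)),
      f (x ∘ π) = ((Equiv.Perm.sign π : ℤ) : ℝ) * f x)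
    {x : Fin m → V} (hx : ¬ Function.Injective x) : f x = 0 := by
  rw [Function.Injective] at hx
  push_neg at hx
  obtain ⟨a, b, hab, hne⟩ := hx
  have hcomp : x ∘ ⇑(Equiv.swap a b) = x := by
    funext k
    rcases eq_or_ne k a with rfl | ha
    · simp [Equiv.swap_apply_left, hab]
    rcases eq_or_ne k b with rfl | hb
    · simp [Equiv.swap_apply_right, hab]
    · simp [Equiv.swap_apply_of_ne_of_ne ha hb]
  have := halt x (Equiv.swap a b)
  rw [hcomp, Equiv.Perm.sign_swap hne] at this
  simp at this
  linarith

lemma gar_tupImage_cons {m : ℕ} (v : V) (x : Fin m → V) :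
    tupImage (Fin.cons v x) = insert v (tupImage x) := by
  ext u
  simp only [gar_mem_tupImage, Finset.mem_insert]
  constructor
  · rintro ⟨k, hk⟩
    rcases Fin.eq_zero_or_eq_succ k with rfl | ⟨k', rfl⟩
    · left; simpa using hk.symm
    · right; exact ⟨k', by simpa using hk⟩
  · rintro (rfl | ⟨k, hk⟩)
    · exact ⟨0, by simp⟩
    · exact ⟨k.succ, by simpa using hk⟩

lemma gar_card_tupImage {m : ℕ} {x : Fin m → V} (hx : Function.Injective x) :
    (tupImage x).card = m := by
  rw [tupImage, Finset.card_image_of_injective _ hx, Finset.card_univ, Fintype.card_fin]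

lemma gar_tupImage_nonempty {m : ℕ} (x : Fin (m+1) → V) : (tupImage x).Nonempty :=
  ⟨x 0, gar_mem_tupImage.2 ⟨0, rfl⟩⟩

lemma gar_wN_eq_zero {K : Finset (Finset V)} (hK : IsComplex K) {n : ℕ} {s : Finset V}
    (hne : s.Nonempty) (hs : s ∉ K) : wN K n s = 0 := by
  rw [wN, Finset.card_eq_zero, Finset.filter_eq_empty_iff]
  rintro t ht ⟨hsub, -⟩
  exact hs ((hK t ht).2 s hsub hne)

lemma gar_wR_ne_zero {K : Finset (Finset V)} {n : ℕ} (hstar : StarProp K n)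
    {s : Finset V} (hs : s ∈ K) : wR K n s ≠ 0 := by
  obtain ⟨t, ht, hsub, hcard⟩ := hstar s hs
  have : 0 < wN K n s := Finset.card_pos.2 ⟨t, Finset.mem_filter.2 ⟨ht, hsub, hcard⟩⟩
  simp only [wR, ne_eq, Nat.cast_eq_zero]
  omega

lemma gar_counting {K : Finset (Finset V)} {n i : ℕ} (hi : i ≤ n) {s : Finset V}
    (hcard : s.card = i + 1) :
    ∑ v : V, (if v ∉ s then wR K n (insert v s) else 0) = ((n:ℝ) - i) * wR K n s := by
  classical
  set F : Finset (Finset V) := K.filter (fun t => s ⊆ t ∧ t.card = n + 1) with hF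
  have hnat : ∑ v ∈ sᶜ, wN K n (insert v s) = (n - i) * wN K n s := by
    have h1 : ∀ v ∉ s, wN K n (insert v s) = (F.filter (fun t => v ∈ t)).card := by
      intro v hv
      rw [wN, hF, Finset.filter_filter]
      congr 1
      ext t
      simp only [Finset.mem_filter, Finset.insert_subset_iff]
      tauto
    calc ∑ v ∈ sᶜ, wN K n (insert v s)
        = ∑ v ∈ sᶜ, (F.filter (fun t => v ∈ t)).card := by
          refine Finset.sum_congr rfl fun v hv => h1 v (Finset.mem_compl.1 hv)
      _ = ∑ v ∈ sᶜ, ∑ t ∈ F, (if v ∈ t then 1 else 0) := by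
          refine Finset.sum_congr rfl fun v _ => ?_
          rw [Finset.card_filter]
      _ = ∑ t ∈ F, ∑ v ∈ sᶜ, (if v ∈ t then 1 else 0) := Finset.sum_comm
      _ = ∑ t ∈ F, (n - i) := by
          refine Finset.sum_congr rfl fun t ht => ?_
          rw [Finset.mem_filter] at ht
          obtain ⟨-, hsub, hct⟩ := ht
          have h2 : (sᶜ.filter (fun v => v ∈ t)) = t \ s := by
            ext v; simp [Finset.mem_sdiff, and_comm]
          rw [← Finset.card_filter, h2, Finset.card_sdiff_of_subset hsub, hct, hcard]
          omega
      _ = F.card * (n - i) := by rw [Finset.sum_const, smul_eq_mul]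
      _ = (n - i) * wN K n s := by rw [Nat.mul_comm]; rfl
  have hsum : ∑ v : V, (if v ∉ s then wR K n (insert v s) else 0)
      = ((∑ v ∈ sᶜ, wN K n (insert v s) : ℕ) : ℝ) := by
    push_cast
    rw [← Finset.sum_filter]
    congr 1
    ext v; simp
  rw [hsum, hnat]
  push_cast [Nat.cast_sub hi]
  rfl

lemma gar_rho_cochain {K : Finset (Finset V)} {m : ℕ} {f : (Fin m → V) → ℝ}
    (hf : IsCochain K f) (v : V) : IsCochain K (rhoOp v f) := by
  constructor
  · intro x hx
    rw [rhoOp, hf.1 x hx]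
    simp
  · intro x π
    rw [rhoOp, rhoOp, gar_tupImage_comp_perm, hf.2 x π]
    split_ifs <;> simp

lemma gar_dOp_comp_cycleRange {m : ℕ} {f : (Fin (m+1) → V) → ℝ}
    (halt : ∀ (x : Fin (m+1) → V) (π : Equiv.Perm (Fin (m+1))),
      f (x ∘ π) = ((Equiv.Perm.sign π : ℤ) : ℝ) * f x)
    (y : Fin (m+2) → V) (j : Fin (m+2)) :
    dOp f (y ∘ ⇑(Fin.cycleRange j)) = (-1:ℝ)^(j:ℕ) * dOp f y := by
  have key : ∀ l : Fin (m+2),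
      (-1:ℝ)^(l:ℕ) * f ((y ∘ ⇑(Fin.cycleRange j)) ∘ l.succAbove)
      = (-1:ℝ)^(j:ℕ) * ((-1:ℝ)^((Fin.cycleRange j l : Fin (m+2)):ℕ)
          * f (y ∘ (Fin.cycleRange j l).succAbove)) := by
    intro l
    have hassoc : (y ∘ ⇑(Fin.cycleRange j)) ∘ l.succAbove
        = y ∘ (⇑(Fin.cycleRange j) ∘ l.succAbove) := rfl
    rcases lt_trichotomy ((l:ℕ)) ((j:ℕ)) with h | h | h
    · have hj1 : (1:ℕ) ≤ (j:ℕ) := by omega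
      rw [hassoc, gar_comp_lt j l h]
      have : y ∘ ((Fin.cycleRange j l).succAbove ∘ ⇑(Fin.cycleRange (⟨(j:ℕ)-1, by omega⟩ : Fin (m+1))))
          = (y ∘ (Fin.cycleRange j l).succAbove) ∘ ⇑(Fin.cycleRange (⟨(j:ℕ)-1, by omega⟩ : Fin (m+1))) := rfl
      rw [this, halt, Fin.sign_cycleRange]
      have hcl : ((Fin.cycleRange j l : Fin (m+2)) : ℕ) = (l:ℕ) + 1 := by
        rw [gar_val_cycleRange, if_pos h]
      rw [hcl]
      have hsign : (((((-1:ℤˣ) ^ ((⟨(j:ℕ)-1, by omega⟩ : Fin (m+1)):ℕ)) : ℤˣ) : ℤ) : ℝ)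
          = (-1:ℝ)^((j:ℕ)-1) := by push_cast; ring_nf
      rw [hsign]
      have hpow : (j:ℕ) + ((l:ℕ)+1) = ((l:ℕ) + ((j:ℕ)-1)) + 2 := by omega
      have : (-1:ℝ)^((j:ℕ)) * (-1:ℝ)^((l:ℕ)+1) = (-1:ℝ)^((l:ℕ)) * (-1:ℝ)^((j:ℕ)-1) := by
        rw [← pow_add, ← pow_add, hpow, pow_add]
        norm_num
      linear_combination (-(f (y ∘ (Fin.cycleRange j l).succAbove))) * this
    · have hlj : l = j := Fin.ext h
      subst hlj
      rw [hassoc, gar_comp_self, Fin.cycleRange_self]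
      have h0 : ((0 : Fin (m+2)) : ℕ) = 0 := rfl
      rw [h0, pow_zero, Fin.succAbove_zero]
      ring
    · rw [hassoc, gar_comp_gt j l h]
      have : y ∘ (l.succAbove ∘ ⇑(Fin.cycleRange (⟨(j:ℕ), by omega⟩ : Fin (m+1))))
          = (y ∘ l.succAbove) ∘ ⇑(Fin.cycleRange (⟨(j:ℕ), by omega⟩ : Fin (m+1))) := rfl
      rw [this, halt, Fin.sign_cycleRange]
      have hcl : (Fin.cycleRange j l) = l := Fin.cycleRange_of_gt (by exact Fin.lt_iff_val_lt_val.2 h)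
      rw [hcl]
      have hsign : (((((-1:ℤˣ) ^ ((⟨(j:ℕ), by omega⟩ : Fin (m+1)):ℕ)) : ℤˣ) : ℤ) : ℝ)
          = (-1:ℝ)^((j:ℕ)) := by push_cast; ring_nf
      rw [hsign]
      ring
  calc dOp f (y ∘ ⇑(Fin.cycleRange j))
      = ∑ l : Fin (m+2), (-1:ℝ)^(l:ℕ) * f ((y ∘ ⇑(Fin.cycleRange j)) ∘ l.succAbove) := rfl
    _ = ∑ l : Fin (m+2), (-1:ℝ)^(j:ℕ) * ((-1:ℝ)^((Fin.cycleRange j l : Fin (m+2)):ℕ)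
          * f (y ∘ (Fin.cycleRange j l).succAbove)) := Finset.sum_congr rfl fun l _ => key l
    _ = (-1:ℝ)^(j:ℕ) * ∑ l : Fin (m+2), ((-1:ℝ)^((Fin.cycleRange j l : Fin (m+2)):ℕ)
          * f (y ∘ (Fin.cycleRange j l).succAbove)) := by rw [Finset.mul_sum]
    _ = (-1:ℝ)^(j:ℕ) * dOp f y := by
        congr 1
        exact Equiv.sum_comp (Fin.cycleRange j)
          (fun l => (-1:ℝ)^((l : Fin (m+2)):ℕ) * f (y ∘ l.succAbove))

/-- `S = ∑_y [y inj] w(y) · (df)(y) · f(tail y)`. -/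
def garS (w : Finset V → ℝ) {m : ℕ} (f : (Fin (m+1) → V) → ℝ) : ℝ :=
  ∑ y : Fin (m+2) → V,
    if Function.Injective y then w (tupImage y) * dOp f y * f (Fin.tail y) else 0

def garQ (w : Finset V → ℝ) {m : ℕ} (f : (Fin (m+1) → V) → ℝ) : ℝ :=
  ∑ y : Fin (m+2) → V,
    if Function.Injective y then w (tupImage y) * dOp f y * dOp f y else 0

def garD (w : Finset V → ℝ) {m : ℕ} (f : (Fin (m+1) → V) → ℝ) : ℝ :=
  ∑ y : Fin (m+2) → V,
    if Function.Injective y then w (tupImage y) * f (Fin.tail y) * f (Fin.tail y) else 0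

def garN (w : Finset V → ℝ) {m : ℕ} (f : (Fin m → V) → ℝ) : ℝ :=
  ∑ x : Fin m → V, w (tupImage x) * f x * f x

lemma gar_S_eq_j (w : Finset V → ℝ) {m : ℕ} (f : (Fin (m+1) → V) → ℝ)
    (halt : ∀ (x : Fin (m+1) → V) (π : Equiv.Perm (Fin (m+1))),
      f (x ∘ π) = ((Equiv.Perm.sign π : ℤ) : ℝ) * f x)
    (j : Fin (m+2)) :
    garS w f = ∑ y : Fin (m+2) → V,
      (if Function.Injective y then
        w (tupImage y) * dOp f y * ((-1:ℝ)^(j:ℕ) * f (y ∘ j.succAbove)) else 0) := by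
  set c := Fin.cycleRange j with hc
  set G : (Fin (m+2) → V) → ℝ := fun y =>
    (if Function.Injective y then
      w (tupImage y) * dOp f y * ((-1:ℝ)^(j:ℕ) * f (y ∘ j.succAbove)) else 0) with hG
  have hbij := gar_comp_perm_bijective (V := V) c
  have hsum : ∑ y : Fin (m+2) → V, G (y ∘ ⇑c) = ∑ y : Fin (m+2) → V, G y :=
    hbij.sum_comp G
  rw [← hsum]
  refine Finset.sum_congr rfl fun y _ => ?_
  simp only [hG]
  by_cases hy : Function.Injective y
  · rw [if_pos hy, if_pos ((gar_inj_comp_perm y c).2 hy)]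
    have h1 : tupImage (y ∘ ⇑c) = tupImage y := gar_tupImage_comp_perm y c
    have h2 : dOp f (y ∘ ⇑c) = (-1:ℝ)^(j:ℕ) * dOp f y := gar_dOp_comp_cycleRange halt y j
    have h3 : (y ∘ ⇑c) ∘ j.succAbove = Fin.tail y := by
      rw [show (y ∘ ⇑c) ∘ j.succAbove = y ∘ (⇑c ∘ j.succAbove) from rfl, hc, gar_comp_self]
      rfl
    rw [h1, h2, h3]
    have hsq : (-1:ℝ)^(j:ℕ) * (-1:ℝ)^(j:ℕ) = 1 := by
      rw [← pow_add]
      exact Even.neg_one_pow ⟨(j:ℕ), by ring⟩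
    linear_combination (-(w (tupImage y) * dOp f y * f (Fin.tail y))) * hsq
  · rw [if_neg hy, if_neg (fun h => hy ((gar_inj_comp_perm y c).1 h))]

lemma gar_S_eq_Q (w : Finset V → ℝ) {m : ℕ} (f : (Fin (m+1) → V) → ℝ)
    (halt : ∀ (x : Fin (m+1) → V) (π : Equiv.Perm (Fin (m+1))),
      f (x ∘ π) = ((Equiv.Perm.sign π : ℤ) : ℝ) * f x) :
    ((m:ℝ)+2) * garS w f = garQ w f := by
  have h1 : ((m:ℝ)+2) * garS w f = ∑ j : Fin (m+2), garS w f := by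
    rw [Finset.sum_const, Finset.card_univ, Fintype.card_fin, nsmul_eq_mul]
    push_cast; ring
  rw [h1]
  calc ∑ j : Fin (m+2), garS w f
      = ∑ j : Fin (m+2), ∑ y : Fin (m+2) → V,
        (if Function.Injective y then
          w (tupImage y) * dOp f y * ((-1:ℝ)^(j:ℕ) * f (y ∘ j.succAbove)) else 0) :=
        Finset.sum_congr rfl fun j _ => gar_S_eq_j w f halt j
    _ = ∑ y : Fin (m+2) → V, ∑ j : Fin (m+2),
        (if Function.Injective y then
          w (tupImage y) * dOp f y * ((-1:ℝ)^(j:ℕ) * f (y ∘ j.succAbove)) else 0) :=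
        Finset.sum_comm
    _ = garQ w f := by
        refine Finset.sum_congr rfl fun y _ => ?_
        by_cases hy : Function.Injective y
        · simp only [if_pos hy]
          rw [← Finset.mul_sum]
          rw [show (∑ j : Fin (m+2), (-1:ℝ)^(j:ℕ) * f (y ∘ j.succAbove)) = dOp f y from rfl]
        · simp only [if_neg hy, Finset.sum_const_zero]

lemma gar_sA_eq_D (w : Finset V → ℝ) {m : ℕ} (f : (Fin (m+1) → V) → ℝ) (k : Fin (m+2)) :
    (∑ y : Fin (m+2) → V,
      if Function.Injective y then
        w (tupImage y) * f (y ∘ k.succAbove) * f (y ∘ k.succAbove) else 0) = garD w f := by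
  set c := Fin.cycleRange k with hc
  set G : (Fin (m+2) → V) → ℝ := fun y =>
    (if Function.Injective y then
      w (tupImage y) * f (y ∘ k.succAbove) * f (y ∘ k.succAbove) else 0) with hG
  have hbij := gar_comp_perm_bijective (V := V) c
  have hsum : ∑ y : Fin (m+2) → V, G (y ∘ ⇑c) = ∑ y : Fin (m+2) → V, G y :=
    hbij.sum_comp G
  rw [show (∑ y : Fin (m+2) → V,
      if Function.Injective y then
        w (tupImage y) * f (y ∘ k.succAbove) * f (y ∘ k.succAbove) else 0)
    = ∑ y : Fin (m+2) → V, G y from rfl, ← hsum]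
  refine Finset.sum_congr rfl fun y _ => ?_
  simp only [hG]
  by_cases hy : Function.Injective y
  · rw [if_pos hy, if_pos ((gar_inj_comp_perm y c).2 hy)]
    have h1 : tupImage (y ∘ ⇑c) = tupImage y := gar_tupImage_comp_perm y c
    have h3 : (y ∘ ⇑c) ∘ k.succAbove = Fin.tail y := by
      rw [show (y ∘ ⇑c) ∘ k.succAbove = y ∘ (⇑c ∘ k.succAbove) from rfl, hc, gar_comp_self]
      rfl
    rw [h1, h3]
  · rw [if_neg hy, if_neg (fun h => hy ((gar_inj_comp_perm y c).1 h))]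

lemma gar_dOp_rho_notMem {m : ℕ} (f : (Fin (m+1) → V) → ℝ) {v : V} {y : Fin (m+2) → V}
    (hv : v ∉ tupImage y) : dOp (rhoOp v f) y = 0 := by
  refine Finset.sum_eq_zero fun j _ => ?_
  have : v ∉ tupImage (y ∘ j.succAbove) := fun h => by
    obtain ⟨k, hk⟩ := gar_mem_tupImage.1 h
    exact hv (gar_mem_tupImage.2 ⟨j.succAbove k, hk⟩)
  rw [show rhoOp v f (y ∘ j.succAbove)
      = if v ∈ tupImage (y ∘ j.succAbove) then f (y ∘ j.succAbove) else 0 from rfl,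
    if_neg this, mul_zero]

lemma gar_dOp_rho_mem {m : ℕ} (f : (Fin (m+1) → V) → ℝ) {y : Fin (m+2) → V}
    (hy : Function.Injective y) (k : Fin (m+2)) :
    dOp (rhoOp (y k) f) y = dOp f y - (-1:ℝ)^(k:ℕ) * f (y ∘ k.succAbove) := by
  have hmem : ∀ j : Fin (m+2), (y k ∈ tupImage (y ∘ j.succAbove)) ↔ j ≠ k := by
    intro j
    rw [gar_mem_tupImage]
    constructor
    · rintro ⟨a, ha⟩ rfl
      exact Fin.succAbove_ne j a (hy ha)
    · intro hjk
      obtain ⟨a, ha⟩ := Fin.exists_succAbove_eq (Ne.symm hjk)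
      exact ⟨a, by rw [Function.comp_apply, ha]⟩
  have hterm : ∀ j : Fin (m+2),
      (-1:ℝ)^(j:ℕ) * (if y k ∈ tupImage (y ∘ j.succAbove) then f (y ∘ j.succAbove) else 0)
      = (-1:ℝ)^(j:ℕ) * f (y ∘ j.succAbove)
        - (if j = k then (-1:ℝ)^(j:ℕ) * f (y ∘ j.succAbove) else 0) := by
    intro j
    by_cases hjk : j = k
    · subst hjk
      rw [if_neg (fun h => (hmem j).1 h rfl), if_pos rfl]
      ring
    · rw [if_pos ((hmem j).2 hjk), if_neg hjk]
      ring
  calc dOp (rhoOp (y k) f) y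
      = ∑ j : Fin (m+2),
          ((-1:ℝ)^(j:ℕ) * f (y ∘ j.succAbove)
            - (if j = k then (-1:ℝ)^(j:ℕ) * f (y ∘ j.succAbove) else 0)) :=
        Finset.sum_congr rfl fun j _ => hterm j
    _ = dOp f y - (-1:ℝ)^(k:ℕ) * f (y ∘ k.succAbove) := by
        rw [Finset.sum_sub_distrib, Finset.sum_ite_eq' Finset.univ k
          (fun j => (-1:ℝ)^(j:ℕ) * f (y ∘ j.succAbove)), if_pos (Finset.mem_univ k)]
        rfl

lemma gar_sum_rho_Q (w : Finset V → ℝ) {m : ℕ} (f : (Fin (m+1) → V) → ℝ) :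
    ∑ v : V, garQ w (rhoOp v f)
      = (m:ℝ) * garQ w f
        + ∑ y : Fin (m+2) → V,
            (if Function.Injective y then
              w (tupImage y) * (∑ k : Fin (m+2),
                f (y ∘ k.succAbove) * f (y ∘ k.succAbove)) else 0) := by
  have hswap : ∑ v : V, garQ w (rhoOp v f)
      = ∑ y : Fin (m+2) → V, ∑ v : V,
          (if Function.Injective y then
            w (tupImage y) * dOp (rhoOp v f) y * dOp (rhoOp v f) y else 0) := by
    rw [show (∑ v : V, garQ w (rhoOp v f)) = ∑ v : V, ∑ y : Fin (m+2) → V,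
      (if Function.Injective y then
        w (tupImage y) * dOp (rhoOp v f) y * dOp (rhoOp v f) y else 0) from rfl]
    exact Finset.sum_comm
  rw [hswap, show (m:ℝ) * garQ w f = ∑ y : Fin (m+2) → V, (m:ℝ) *
      (if Function.Injective y then w (tupImage y) * dOp f y * dOp f y else 0) by
        rw [← Finset.mul_sum]; rfl,
    ← Finset.sum_add_distrib]
  refine Finset.sum_congr rfl fun y _ => ?_
  by_cases hy : Function.Injective y
  · simp only [if_pos hy]
    have hzero : ∀ v ∈ Finset.univ, v ∉ tupImage y →
        w (tupImage y) * dOp (rhoOp v f) y * dOp (rhoOp v f) y = 0 := by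
      intro v _ hv
      rw [gar_dOp_rho_notMem f hv]
      ring
    rw [← Finset.sum_subset (Finset.subset_univ (tupImage y)) hzero]
    rw [show (∑ v ∈ tupImage y, w (tupImage y) * dOp (rhoOp v f) y * dOp (rhoOp v f) y)
        = ∑ k : Fin (m+2), w (tupImage y) * dOp (rhoOp (y k) f) y * dOp (rhoOp (y k) f) y
      from Finset.sum_image (fun a _ b _ h => hy h)]
    have hexp : ∀ k : Fin (m+2),
        w (tupImage y) * dOp (rhoOp (y k) f) y * dOp (rhoOp (y k) f) y
        = w (tupImage y) * (dOp f y * dOp f y)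
          - ((-1:ℝ)^(k:ℕ) * f (y ∘ k.succAbove)) * (2 * w (tupImage y) * dOp f y)
          + w (tupImage y) * (f (y ∘ k.succAbove) * f (y ∘ k.succAbove)) := by
      intro k
      rw [gar_dOp_rho_mem f hy k]
      have hsq : (-1:ℝ)^(k:ℕ) * (-1:ℝ)^(k:ℕ) = 1 := by
        rw [← pow_add]
        exact Even.neg_one_pow ⟨(k:ℕ), by ring⟩
      linear_combination (w (tupImage y) * f (y ∘ k.succAbove) * f (y ∘ k.succAbove)) * hsq
    rw [Finset.sum_congr rfl fun k _ => hexp k]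
    rw [Finset.sum_add_distrib, Finset.sum_sub_distrib, Finset.sum_const,
      ← Finset.sum_mul, ← Finset.mul_sum,
      show (∑ k : Fin (m+2), (-1:ℝ)^(k:ℕ) * f (y ∘ k.succAbove)) = dOp f y from rfl,
      Finset.card_univ, Fintype.card_fin, nsmul_eq_mul]
    push_cast
    ring
  · simp only [if_neg hy, Finset.sum_const_zero]
    ring

lemma gar_sum_cons {m : ℕ} (F : (Fin (m+1) → V) → ℝ) :
    ∑ y : Fin (m+1) → V, F y = ∑ v : V, ∑ x : Fin m → V, F (Fin.cons v x) := by
  rw [← Equiv.sum_comp (Fin.consEquiv (fun _ : Fin (m+1) => V)) F, Fintype.sum_prod_type]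
  rfl

lemma gar_D_eq_N {K : Finset (Finset V)} {n i : ℕ} (hi : i ≤ n)
    {f : (Fin (i+1) → V) → ℝ}
    (halt : ∀ (x : Fin (i+1) → V) (π : Equiv.Perm (Fin (i+1))),
      f (x ∘ π) = ((Equiv.Perm.sign π : ℤ) : ℝ) * f x) :
    garD (wR K n) f = ((n:ℝ) - i) * garN (wR K n) f := by
  classical
  rw [show garD (wR K n) f = ∑ y : Fin (i+2) → V,
    (if Function.Injective y then
      wR K n (tupImage y) * f (Fin.tail y) * f (Fin.tail y) else 0) from rfl,
    gar_sum_cons (fun y : Fin (i+2) → V => if Function.Injective y then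
      wR K n (tupImage y) * f (Fin.tail y) * f (Fin.tail y) else 0)]
  simp only [Fin.tail_cons]
  rw [Finset.sum_comm]
  rw [show ((n:ℝ) - i) * garN (wR K n) f
    = ∑ x : Fin (i+1) → V, ((n:ℝ) - i) * (wR K n (tupImage x) * f x * f x) by
      rw [← Finset.mul_sum]; rfl]
  refine Finset.sum_congr rfl fun x _ => ?_
  by_cases hx : Function.Injective x
  · have hcond : ∀ v : V, Function.Injective (Fin.cons v x) ↔ v ∉ tupImage x := by
      intro v
      rw [Fin.cons_injective_iff]
      constructor
      · rintro ⟨h1, -⟩ hv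
        obtain ⟨k, hk⟩ := gar_mem_tupImage.1 hv
        exact h1 ⟨k, hk⟩
      · intro hv
        exact ⟨fun hr => hv (gar_mem_tupImage.2 hr), hx⟩
    have hper : ∀ v : V,
        (if Function.Injective (Fin.cons v x) then
          wR K n (tupImage (Fin.cons v x)) * f x * f x else 0)
        = (if v ∉ tupImage x then wR K n (insert v (tupImage x)) else 0) * (f x * f x) := by
      intro v
      by_cases hv : v ∉ tupImage x
      · rw [if_pos ((hcond v).2 hv), if_pos hv, gar_tupImage_cons]
        ring
      · rw [if_neg (fun h => hv ((hcond v).1 h)), if_neg hv, zero_mul]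
    rw [Finset.sum_congr rfl fun v _ => hper v, ← Finset.sum_mul,
      gar_counting hi (gar_card_tupImage hx)]
    ring
  · have hfx : f x = 0 := gar_alt_zero halt hx
    have hninj : ∀ v : V, ¬ Function.Injective (Fin.cons v x) := fun v h =>
      hx (Fin.cons_injective_iff.1 h).2
    simp [hninj, hfx]

lemma gar_oinner_eq_S {K : Finset (Finset V)} (hK : IsComplex K) {n i : ℕ}
    (hstar : StarProp K n) (g : (Fin (i+1) → V) → ℝ) :
    oinner (wR K n) (deltaOp K (wR K n) (dOp g)) g
      = garS (wR K n) g / (Nat.factorial (i+1)) := by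
  classical
  rw [oinner]
  congr 1
  have claim : ∀ (v : V) (x : Fin (i+1) → V),
      wR K n (tupImage x) *
        (if IsSimplex K (Fin.cons v x) then
          (wR K n (insert v (tupImage x)) / wR K n (tupImage x)) * dOp g (Fin.cons v x)
        else 0) * g x
      = (if Function.Injective (Fin.cons v x) then
          wR K n (tupImage (Fin.cons v x)) * dOp g (Fin.cons v x)
            * g x else 0) := by
    intro v x
    by_cases hs : IsSimplex K (Fin.cons v x)
    · rw [if_pos hs, if_pos hs.1, gar_tupImage_cons]
      have hxK : tupImage x ∈ K := by
        refine (hK _ hs.2).2 (tupImage x) ?_ (gar_tupImage_nonempty x)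
        rw [gar_tupImage_cons]
        exact Finset.subset_insert _ _
      have hw : wR K n (tupImage x) ≠ 0 := gar_wR_ne_zero hstar hxK
      field_simp
    · rw [if_neg hs]
      by_cases hinj : Function.Injective (Fin.cons v x)
      · rw [if_pos hinj]
        have hmem : tupImage (Fin.cons v x) ∉ K := fun hmem => hs ⟨hinj, hmem⟩
        have hz : wR K n (tupImage (Fin.cons v x)) = 0 := by
          rw [wR, gar_wN_eq_zero hK (gar_tupImage_nonempty _) hmem]
          simp
        rw [hz]
        simp
      · rw [if_neg hinj]
        simp
  calc ∑ x : Fin (i+1) → V,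
      wR K n (tupImage x) * deltaOp K (wR K n) (dOp g) x * g x
      = ∑ x : Fin (i+1) → V, ∑ v : V,
          (wR K n (tupImage x) *
            (if IsSimplex K (Fin.cons v x) then
              (wR K n (insert v (tupImage x)) / wR K n (tupImage x)) * dOp g (Fin.cons v x)
            else 0) * g x) := by
        refine Finset.sum_congr rfl fun x _ => ?_
        rw [show deltaOp K (wR K n) (dOp g) x = ∑ v : V,
          (if IsSimplex K (Fin.cons v x) then
            (wR K n (insert v (tupImage x)) / wR K n (tupImage x)) * dOp g (Fin.cons v x)
          else 0) from rfl, Finset.mul_sum, Finset.sum_mul]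
    _ = ∑ v : V, ∑ x : Fin (i+1) → V,
          (if Function.Injective (Fin.cons v x) then
            wR K n (tupImage (Fin.cons v x)) * dOp g (Fin.cons v x)
              * g x else 0) := by
        rw [Finset.sum_comm]
        exact Finset.sum_congr rfl fun v _ =>
          Finset.sum_congr rfl fun x _ => claim v x
    _ = garS (wR K n) g := by
        rw [show garS (wR K n) g = ∑ y : Fin (i+2) → V,
          (if Function.Injective y then
            wR K n (tupImage y) * dOp g y * g (Fin.tail y) else 0) from rfl,
          gar_sum_cons (fun y : Fin (i+2) → V => if Function.Injective y then
            wR K n (tupImage y) * dOp g y * g (Fin.tail y) else 0)]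
        simp only [Fin.tail_cons]

lemma gar_R_eq_D (w : Finset V → ℝ) {m : ℕ} (f : (Fin (m+1) → V) → ℝ) :
    (∑ y : Fin (m+2) → V,
      (if Function.Injective y then
        w (tupImage y) * (∑ k : Fin (m+2),
          f (y ∘ k.succAbove) * f (y ∘ k.succAbove)) else 0))
      = ((m:ℝ)+2) * garD w f := by
  have h1 : ∀ y : Fin (m+2) → V,
      (if Function.Injective y then
        w (tupImage y) * (∑ k : Fin (m+2),
          f (y ∘ k.succAbove) * f (y ∘ k.succAbove)) else 0)
      = ∑ k : Fin (m+2), (if Function.Injective y then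
          w (tupImage y) * f (y ∘ k.succAbove) * f (y ∘ k.succAbove) else 0) := by
    intro y
    by_cases hy : Function.Injective y
    · simp only [if_pos hy]
      rw [Finset.mul_sum]
      exact Finset.sum_congr rfl fun k _ => (mul_assoc _ _ _).symm
    · simp only [if_neg hy, Finset.sum_const_zero]
  rw [Finset.sum_congr rfl fun y _ => h1 y, Finset.sum_comm]
  rw [Finset.sum_congr rfl fun k _ => gar_sA_eq_D w f k]
  rw [Finset.sum_const, Finset.card_univ, Fintype.card_fin, nsmul_eq_mul]
  push_cast
  ring

/-- Garland's local decomposition, Lemma of Borel: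
`i·(Δf,f) = ∑_v (Δ ρ_v f, ρ_v f) − (n−i)(f,f)` for every `i`-cochain `f`. -/
theorem garland_local_decomposition (K : Finset (Finset V)) (hK : IsComplex K)
    (n : ℕ) (hdim : DimLE K n) (hstar : StarProp K n)
    (i : ℕ) (hi : i ≤ n) (f : (Fin (i + 1) → V) → ℝ) (hf : IsCochain K f) :
    (i : ℝ) * oinner (wR K n) (deltaOp K (wR K n) (dOp f)) f
      = (∑ v : V, oinner (wR K n)
            (deltaOp K (wR K n) (dOp (rhoOp v f))) (rhoOp v f))
        - ((n : ℝ) - i) * oinner (wR K n) f f := by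
  classical
  set w := wR K n with hw
  set c : ℝ := (Nat.factorial (i+1) : ℝ) with hcdef
  have hII_f : ((i:ℝ)+2) * garS w f = garQ w f := gar_S_eq_Q w f hf.2
  have hII_v : ∀ v : V, ((i:ℝ)+2) * garS w (rhoOp v f) = garQ w (rhoOp v f) :=
    fun v => gar_S_eq_Q w (rhoOp v f) (gar_rho_cochain hf v).2
  have hsumv : ((i:ℝ)+2) * ∑ v : V, garS w (rhoOp v f) = ∑ v : V, garQ w (rhoOp v f) := by
    rw [Finset.mul_sum]
    exact Finset.sum_congr rfl fun v _ => hII_v v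
  have hIII := gar_sum_rho_Q w f
  have hIV := gar_R_eq_D w f
  have hV : garD w f = ((n:ℝ) - i) * garN w f := gar_D_eq_N hi hf.2
  have key : (i:ℝ) * garS w f
      = (∑ v : V, garS w (rhoOp v f)) - ((n:ℝ) - i) * garN w f := by
    have h2 : ((i:ℝ)+2) ≠ 0 := by positivity
    apply mul_left_cancel₀ h2
    linear_combination (i:ℝ) * hII_f - hsumv - hIII - hIV - ((i:ℝ)+2) * hV
  rw [gar_oinner_eq_S hK hstar f,
    Finset.sum_congr rfl fun v (_ : v ∈ Finset.univ) => gar_oinner_eq_S hK hstar (rhoOp v f),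
    show oinner w f f = garN w f / c from rfl, ← Finset.sum_div]
  calc (i:ℝ) * (garS w f / c) = ((i:ℝ) * garS w f) / c := by ring
    _ = ((∑ v : V, garS w (rhoOp v f)) - ((n:ℝ) - i) * garN w f) / c := by rw [key]
    _ = (∑ v : V, garS w (rhoOp v f)) / c - ((n:ℝ) - i) * (garN w f / c) := by ring

end
end

section
/- Let X be a finite n-dimensional simplicial complex satisfying (⋆), v a vertex, and τ_v, ρ_v, d_v, δ_v, Δ_v the local operators on the link Lk(v). Then for f ∈ C^i(X): τ_v d ρ_v f = −d_v τ_v f (for i ≥ 1), τ_v δ f = −δ_v τ_v f (for i ≥ 2), and τ_v Δ ρ_v f = Δ_v τ_v f (for i ≥ 1). Consequently (Δ ρ_v f, ρ_v f) = (Δ_v τ_v f, τ_v f)_v. -/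
open Finset
open scoped Classical

noncomputable section

variable {V : Type*} [Fintype V] [DecidableEq V]

/-!
Every identity is checked on a single simplex `s` of the link, where `τ_v` reads the value at
`[v, s]`. In `d ρ_v f ([v, s])` the face opposite `v` misses `v` and vanishes, while every other
face keeps `v` in front and carries one extra sign. In `δ f ([v, s])` a new vertex `u` is put in
front of `v`, and swapping the two costs a sign; the weights agree since `w_v(s) = w([v, s])`.
For the inner products, only tuples containing `v` contribute, and the summand is symmetric, so
summing over all positions of `v` gives `(j + 2)` times the sum over tuples starting with `v`,
which cancels against `(j + 2)! / (j + 1)!`.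
-/

section Alternating

variable {α : Type*} {m : ℕ}

def IsAlternating (g : (Fin m → α) → ℝ) : Prop :=
  ∀ (x : Fin m → α) (π : Equiv.Perm (Fin m)),
    g (x ∘ π) = ((Equiv.Perm.sign π : ℤ) : ℝ) * g x

theorem IsAlternating.comp_swap {g : (Fin m → α) → ℝ} (hg : IsAlternating g)
    (x : Fin m → α) {a b : Fin m} (hab : a ≠ b) : g (x ∘ Equiv.swap a b) = - g x := by
  simp [hg x, Equiv.Perm.sign_swap hab]

theorem Equiv.Perm.exists_comp_succ_eq_succ_comp {ψ : Equiv.Perm (Fin (m + 1))} (h0 : ψ 0 = 0) :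
    ∃ σ : Equiv.Perm (Fin m), ψ ∘ Fin.succ = Fin.succ ∘ σ ∧ sign σ = sign ψ := by
  obtain ⟨⟨p, σ⟩, rfl⟩ := Equiv.Perm.decomposeFin.symm.surjective ψ
  obtain rfl : p = 0 := by rwa [Equiv.Perm.decomposeFin_symm_apply_zero] at h0
  refine ⟨σ, funext fun k => ?_, by simp [Equiv.Perm.decomposeFin.symm_sign]⟩
  simp [Equiv.Perm.decomposeFin_symm_apply_succ]

/-- Conjugating by the cycles `Fin.cycleRange` reduces this to a permutation fixing `0`. -/
theorem Equiv.Perm.exists_comp_succAbove_eq (π : Equiv.Perm (Fin (m + 1))) (j : Fin (m + 1)) :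
    ∃ σ : Equiv.Perm (Fin m), π ∘ j.succAbove = (π j).succAbove ∘ σ ∧
      (-1) ^ (j : ℕ) * sign σ = (-1) ^ (π j : ℕ) * sign π := by
  set ψ := (π j).cycleRange * π * j.cycleRange.symm
  obtain ⟨σ, hσ, hsign⟩ := exists_comp_succ_eq_succ_comp (ψ := ψ) (by simp [ψ])
  refine ⟨σ, funext fun k => ?_, ?_⟩
  · have := congrFun hσ k
    simp only [ψ, Function.comp_apply, Equiv.Perm.mul_apply, Fin.cycleRange_symm_succ] at this
    simp [← Fin.cycleRange_symm_succ, ← this]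
  · simp only [hsign, ψ, sign_mul, sign_symm, Fin.sign_cycleRange]
    rw [mul_comm, mul_assoc, Int.units_mul_self, mul_one]

theorem IsAlternating.dOp {g : (Fin m → α) → ℝ} (hg : IsAlternating g) :
    IsAlternating (dOp g) := by
  intro x π
  have hterm : ∀ j : Fin (m + 1), (-1 : ℝ) ^ (j : ℕ) * g ((x ∘ π) ∘ j.succAbove) =
      ((Equiv.Perm.sign π : ℤ) : ℝ) * ((-1) ^ (π j : ℕ) * g (x ∘ (π j).succAbove)) := by
    intro j
    obtain ⟨σ, hσ, hsign⟩ := π.exists_comp_succAbove_eq j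
    have hsign' := congrArg (fun u : ℤˣ => ((u : ℤ) : ℝ)) hsign
    push_cast at hsign'
    rw [Function.comp_assoc, hσ, ← Function.comp_assoc, hg, ← mul_assoc, hsign']
    ring
  simp only [_root_.dOp, hterm, ← Finset.mul_sum]
  rw [Equiv.sum_comp π (fun k => (-1 : ℝ) ^ (k : ℕ) * g (x ∘ k.succAbove))]

theorem Fin.cons_comp_perm (a : α) (x : Fin m → α) (π : Equiv.Perm (Fin m)) :
    (Fin.cons a (x ∘ π) : Fin (m + 1) → α)
      = Fin.cons a x ∘ Equiv.Perm.decomposeFin.symm (0, π) := by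
  funext k
  refine Fin.cases ?_ (fun l => ?_) k <;> simp [Equiv.Perm.decomposeFin_symm_apply_succ]

end Alternating

section PointedSum

variable {α : Type*} [Fintype α] [DecidableEq α] {m : ℕ}

theorem sum_eq_mul_sum_cons (a : α) {h : (Fin (m + 1) → α) → ℝ}
    (hperm : ∀ x (π : Equiv.Perm (Fin (m + 1))), h (x ∘ π) = h x)
    (hsupp : ∀ x, h x ≠ 0 → Function.Injective x ∧ ∃ k, x k = a) :
    ∑ x, h x = (m + 1) * ∑ y, h (Fin.cons a y) := by
  have hsplit : ∀ x, h x = ∑ k, if x k = a then h x else 0 := by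
    intro x
    by_cases hx : h x = 0
    · simp [hx]
    obtain ⟨hinj, k₀, rfl⟩ := hsupp x hx
    simp [hinj.eq_iff]
  have hslice : ∀ k : Fin (m + 1), (∑ x : Fin (m + 1) → α, if x k = a then h x else 0)
      = ∑ y, h (Fin.cons a y) := by
    intro k
    rw [← (Fin.insertNthEquiv (fun _ => α) k).sum_comp, Fintype.sum_prod_type]
    simp [Fin.insertNthEquiv, ← Fin.cons_comp_cycleRange, hperm]
  rw [Finset.sum_congr rfl fun x _ => hsplit x, Finset.sum_comm,
    Finset.sum_congr rfl fun k _ => hslice k]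
  simp

end PointedSum

set_option linter.unusedSectionVars false

section Link

variable {K : Finset (Finset V)} {v : V} {m : ℕ}

theorem mem_tupImage {a : V} {x : Fin m → V} : a ∈ tupImage x ↔ ∃ i, x i = a := by
  simp [tupImage]

@[simp]
theorem tupImage_comp_perm (x : Fin m → V) (π : Equiv.Perm (Fin m)) :
    tupImage (x ∘ π) = tupImage x := by
  ext a
  simp only [mem_tupImage, Function.comp_apply]
  exact (π.surjective.exists (p := fun i => x i = a)).symm

@[simp]
theorem tupImage_cons (a : V) (x : Fin m → V) :
    tupImage (Fin.cons a x : Fin (m + 1) → V) = insert a (tupImage x) := by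
  ext b
  simp [tupImage, Fin.exists_fin_succ, eq_comm]

theorem injective_cons_iff {a : V} {x : Fin m → V} :
    Function.Injective (Fin.cons a x : Fin (m + 1) → V) ↔
      a ∉ tupImage x ∧ Function.Injective x := by
  simp [Fin.cons_injective_iff, mem_tupImage]

@[simp]
theorem isSimplex_comp_perm (x : Fin m → V) (π : Equiv.Perm (Fin m)) :
    IsSimplex K (x ∘ π) ↔ IsSimplex K x := by
  simp [IsSimplex, π.injective_comp]

theorem cons_cons_comp_swap (a b : V) (x : Fin m → V) :
    (Fin.cons a (Fin.cons b x) : Fin (m + 2) → V) ∘ Equiv.swap 0 1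
      = Fin.cons b (Fin.cons a x) := by
  funext i
  refine Fin.cases ?_ (Fin.cases ?_ fun k => ?_) i
  · simp
  · simp [show (Fin.succ 0 : Fin (m + 2)) = 1 from rfl]
  · rw [Function.comp_apply, Equiv.swap_apply_of_ne_of_ne (Fin.succ_ne_zero _)
      (by simp [Fin.ext_iff])]
    simp

theorem isSimplex_linkK_iff {x : Fin m → V} :
    IsSimplex (linkK K v) x ↔
      IsSimplex K x ∧ v ∉ tupImage x ∧ insert v (tupImage x) ∈ K := by
  simp [IsSimplex, linkK, and_assoc]

theorem IsSimplex.cons_of_linkK {x : Fin m → V} (hx : IsSimplex (linkK K v) x) :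
    IsSimplex K (Fin.cons v x) := by
  obtain ⟨⟨hinj, -⟩, hv, hmem⟩ := isSimplex_linkK_iff.mp hx
  exact ⟨injective_cons_iff.mpr ⟨hv, hinj⟩, by rwa [tupImage_cons]⟩

theorem IsSimplex.linkK_of_cons (hK : IsComplex K) {x : Fin (m + 1) → V}
    (hx : IsSimplex K (Fin.cons v x)) : IsSimplex (linkK K v) x := by
  obtain ⟨hinj, hmem⟩ := hx
  rw [tupImage_cons] at hmem
  obtain ⟨hv, hinj⟩ := injective_cons_iff.mp hinj
  exact isSimplex_linkK_iff.mpr ⟨⟨hinj, (hK _ hmem).2 _ (Finset.subset_insert _ _)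
    (Finset.univ_nonempty.image x)⟩, hv, hmem⟩

theorem isSimplex_linkK_iff_cons (hK : IsComplex K) {x : Fin (m + 1) → V} :
    IsSimplex (linkK K v) x ↔ IsSimplex K (Fin.cons v x) :=
  ⟨IsSimplex.cons_of_linkK, IsSimplex.linkK_of_cons hK⟩

/-- The `n`-simplices through `insert v s` correspond to the `(n-1)`-simplices of the link
through `s`, via `t ↦ t.erase v`. -/
theorem wN_linkK (hK : IsComplex K) {n : ℕ} (hn : 1 ≤ n) {s : Finset V} (hv : v ∉ s) :
    wN (linkK K v) (n - 1) s = wN K n (insert v s) := by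
  unfold wN
  apply Finset.card_nbij' (insert v) (Finset.erase · v)
  · intro t ht
    simp only [Finset.mem_coe, linkK, Finset.mem_filter] at ht ⊢
    obtain ⟨⟨-, hvt, htK⟩, hst, hcard⟩ := ht
    refine ⟨htK, Finset.insert_subset_insert _ hst, ?_⟩
    rw [Finset.card_insert_of_notMem hvt]
    omega
  · intro t ht
    simp only [Finset.mem_coe, linkK, Finset.mem_filter] at ht ⊢
    obtain ⟨htK, hst, hcard⟩ := ht
    have hvt : v ∈ t := hst (Finset.mem_insert_self _ _)
    have hcard' : (t.erase v).card = n := by rw [Finset.card_erase_of_mem hvt]; omega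
    have hne : (t.erase v).Nonempty := by rw [← Finset.card_pos]; omega
    refine ⟨⟨(hK t htK).2 _ (Finset.erase_subset _ _) hne, Finset.notMem_erase _ _,
      by rwa [Finset.insert_erase hvt]⟩, ?_, by omega⟩
    exact fun a ha =>
      Finset.mem_erase.mpr ⟨fun h => hv (h ▸ ha), hst (Finset.mem_insert_of_mem ha)⟩
  · intro t ht
    simp only [Finset.mem_coe, linkK, Finset.mem_filter] at ht
    exact Finset.erase_insert ht.1.2.1
  · intro t ht
    simp only [Finset.mem_coe, Finset.mem_filter] at ht
    exact Finset.insert_erase (ht.2.1 (Finset.mem_insert_self _ _))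

theorem wR_linkK (hK : IsComplex K) {n : ℕ} (hn : 1 ≤ n) {s : Finset V} (hv : v ∉ s) :
    wR (linkK K v) (n - 1) s = wR K n (insert v s) := by
  simp only [wR, wN_linkK hK hn hv]

end Link

section LocalOperators

variable {K : Finset (Finset V)} {v : V} {m : ℕ}

theorem IsCochain.isAlternating {f : (Fin m → V) → ℝ} (hf : IsCochain K f) :
    IsAlternating f :=
  hf.2

theorem IsAlternating.rhoOp {f : (Fin m → V) → ℝ} (hf : IsAlternating f) :
    IsAlternating (rhoOp v f) := by
  intro x π
  simp only [_root_.rhoOp, tupImage_comp_perm]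
  split_ifs
  · exact hf x π
  · ring

theorem IsAlternating.deltaOp (w : Finset V → ℝ) {F : (Fin (m + 1) → V) → ℝ}
    (hF : IsAlternating F) : IsAlternating (deltaOp K w F) := by
  intro x π
  simp only [_root_.deltaOp, Finset.mul_sum]
  refine Finset.sum_congr rfl fun u _ => ?_
  rw [Fin.cons_comp_perm, isSimplex_comp_perm, tupImage_comp_perm, hF,
    Equiv.Perm.decomposeFin.symm_sign, if_pos rfl, one_mul]
  split_ifs <;> ring

theorem rhoOp_cons (f : (Fin (m + 1) → V) → ℝ) (y : Fin m → V) :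
    rhoOp v f (Fin.cons v y) = f (Fin.cons v y) := by
  simp [rhoOp]

theorem tauOp_eq_of_support {f : (Fin (m + 1) → V) → ℝ}
    (hf : ∀ y, ¬ IsSimplex K y → f y = 0) (y : Fin m → V) :
    tauOp K v f y = f (Fin.cons v y) := by
  unfold tauOp
  split_ifs with h
  · rfl
  · exact (hf _ h).symm

theorem tauOp_dOp_rhoOp {f : (Fin (m + 1) → V) → ℝ} (hf : ∀ y, ¬ IsSimplex K y → f y = 0)
    {x : Fin (m + 1) → V} (hx : IsSimplex (linkK K v) x) :
    tauOp K v (dOp (rhoOp v f)) x = - dOp (tauOp K v f) x := by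
  have hvx : v ∉ tupImage x := (isSimplex_linkK_iff.mp hx).2.1
  have hface : ∀ i : Fin (m + 1), (Fin.cons v x : Fin (m + 2) → V) ∘ i.succ.succAbove
      = Fin.cons v (x ∘ i.succAbove) := Fin.cons_comp_succ_succAbove v x
  rw [tauOp, if_pos hx.cons_of_linkK, dOp, dOp, Fin.sum_univ_succ, ← Finset.sum_neg_distrib]
  simp only [Fin.succAbove_zero, Fin.cons_comp_succ, hface, rhoOp_cons, tauOp_eq_of_support hf,
    Fin.val_succ, pow_succ]
  simp [rhoOp, hvx]

theorem isSimplex_cons_cons_iff_linkK (hK : IsComplex K) (u : V) (x : Fin m → V) :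
    IsSimplex K (Fin.cons u (Fin.cons v x)) ↔ IsSimplex (linkK K v) (Fin.cons u x) := by
  rw [isSimplex_linkK_iff_cons hK, ← isSimplex_comp_perm _ (Equiv.swap 0 1),
    cons_cons_comp_swap]

theorem tauOp_deltaOp (hK : IsComplex K) {n : ℕ} (hn : 1 ≤ n) {F : (Fin (m + 2) → V) → ℝ}
    (hF : IsAlternating F) {x : Fin m → V} (hx : IsSimplex (linkK K v) x) :
    tauOp K v (deltaOp K (wR K n) F) x
      = - deltaOp (linkK K v) (wR (linkK K v) (n - 1)) (tauOp K v F) x := by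
  have hvx : v ∉ tupImage x := (isSimplex_linkK_iff.mp hx).2.1
  rw [tauOp, if_pos hx.cons_of_linkK, deltaOp, deltaOp, ← Finset.sum_neg_distrib]
  refine Finset.sum_congr rfl fun u _ => ?_
  rw [isSimplex_cons_cons_iff_linkK hK]
  split_ifs with hu
  · have hvux : v ∉ insert u (tupImage x) := by
      simpa using (isSimplex_linkK_iff.mp hu).2.1
    have hswap : F (Fin.cons u (Fin.cons v x)) = - F (Fin.cons v (Fin.cons u x)) := by
      rw [← cons_cons_comp_swap v u x, hF.comp_swap _ (by simp)]
    rw [tauOp, if_pos hu.cons_of_linkK, tupImage_cons, Finset.insert_comm,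
      wR_linkK hK hn hvux, wR_linkK hK hn hvx, hswap]
    ring
  · ring

theorem tauOp_deltaOp_dOp_rhoOp (hK : IsComplex K) {n : ℕ} (hn : 1 ≤ n)
    {f : (Fin (m + 1) → V) → ℝ} (hf : IsCochain K f) {x : Fin m → V}
    (hx : IsSimplex (linkK K v) x) :
    tauOp K v (deltaOp K (wR K n) (dOp (rhoOp v f))) x
      = deltaOp (linkK K v) (wR (linkK K v) (n - 1)) (dOp (tauOp K v f)) x := by
  rw [tauOp_deltaOp hK hn hf.isAlternating.rhoOp.dOp hx, deltaOp, deltaOp,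
    ← Finset.sum_neg_distrib]
  refine Finset.sum_congr rfl fun u _ => ?_
  split_ifs with hu
  · rw [tauOp_dOp_rhoOp hf.1 hu]
    ring
  · ring

theorem oinner_deltaOp_dOp_rhoOp (hK : IsComplex K) {n : ℕ} (hn : 1 ≤ n)
    {f : (Fin (m + 2) → V) → ℝ} (hf : IsCochain K f) :
    oinner (wR K n) (deltaOp K (wR K n) (dOp (rhoOp v f))) (rhoOp v f)
      = oinner (wR (linkK K v) (n - 1))
          (deltaOp (linkK K v) (wR (linkK K v) (n - 1)) (dOp (tauOp K v f)))
          (tauOp K v f) := by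
  set D := deltaOp K (wR K n) (dOp (rhoOp v f))
  have hD : IsAlternating D := hf.isAlternating.rhoOp.dOp.deltaOp _
  have hperm : ∀ x (π : Equiv.Perm (Fin (m + 2))),
      wR K n (tupImage (x ∘ π)) * D (x ∘ π) * rhoOp v f (x ∘ π)
        = wR K n (tupImage x) * D x * rhoOp v f x := by
    intro x π
    rw [tupImage_comp_perm, hD, hf.isAlternating.rhoOp]
    have hsq : ((Equiv.Perm.sign π : ℤ) : ℝ) * ((Equiv.Perm.sign π : ℤ) : ℝ) = 1 := by
      rw [← Int.cast_mul, ← Units.val_mul, Int.units_mul_self, Units.val_one, Int.cast_one]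
    linear_combination (wR K n (tupImage x) * D x * rhoOp v f x) * hsq
  have hsupp : ∀ x, wR K n (tupImage x) * D x * rhoOp v f x ≠ 0 →
      Function.Injective x ∧ ∃ k, x k = v := by
    intro x hx
    have hρ : rhoOp v f x ≠ 0 := right_ne_zero_of_mul hx
    unfold rhoOp at hρ
    split_ifs at hρ with hv
    · have hxK : IsSimplex K x := by
        by_contra hxK
        exact hρ (hf.1 x hxK)
      exact ⟨hxK.1, mem_tupImage.mp hv⟩
    · exact absurd rfl hρ
  have hterm : ∀ y : Fin (m + 1) → V,
      wR K n (tupImage (Fin.cons v y)) * D (Fin.cons v y) * rhoOp v f (Fin.cons v y)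
        = wR (linkK K v) (n - 1) (tupImage y)
          * deltaOp (linkK K v) (wR (linkK K v) (n - 1)) (dOp (tauOp K v f)) y
          * tauOp K v f y := by
    intro y
    rw [rhoOp_cons, tauOp_eq_of_support hf.1]
    by_cases hy : IsSimplex K (Fin.cons v y)
    · have hyl := hy.linkK_of_cons hK
      rw [← tauOp_deltaOp_dOp_rhoOp hK hn hf hyl, tauOp, if_pos hy, tupImage_cons,
        wR_linkK hK hn (isSimplex_linkK_iff.mp hyl).2.1]
    · simp [hf.1 _ hy]
  unfold oinner
  rw [sum_eq_mul_sum_cons v hperm hsupp, Finset.sum_congr rfl fun y _ => hterm y,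
    Nat.factorial_succ (m + 1)]
  push_cast
  exact mul_div_mul_left _ _ (by positivity)

end LocalOperators

theorem tau_commutation_identities_general (K : Finset (Finset V)) (hK : IsComplex K)
    (n : ℕ) (hn : 1 ≤ n)
    (v : V) :
    (∀ (j : ℕ) (f : (Fin (j + 2) → V) → ℝ), IsCochain K f →
      ∀ x : Fin (j + 2) → V, IsSimplex (linkK K v) x →
        tauOp K v (dOp (rhoOp v f)) x = - dOp (tauOp K v f) x) ∧
    (∀ (j : ℕ) (f : (Fin (j + 3) → V) → ℝ), IsCochain K f →
      ∀ x : Fin (j + 1) → V, IsSimplex (linkK K v) x →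
        tauOp K v (deltaOp K (wR K n) f) x
          = - deltaOp (linkK K v) (wR (linkK K v) (n - 1)) (tauOp K v f) x) ∧
    (∀ (j : ℕ) (f : (Fin (j + 2) → V) → ℝ), IsCochain K f →
      ∀ x : Fin (j + 1) → V, IsSimplex (linkK K v) x →
        tauOp K v (deltaOp K (wR K n) (dOp (rhoOp v f))) x
          = deltaOp (linkK K v) (wR (linkK K v) (n - 1)) (dOp (tauOp K v f)) x) ∧
    (∀ (j : ℕ) (f : (Fin (j + 2) → V) → ℝ), IsCochain K f →
      oinner (wR K n) (deltaOp K (wR K n) (dOp (rhoOp v f))) (rhoOp v f)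
        = oinner (wR (linkK K v) (n - 1))
            (deltaOp (linkK K v) (wR (linkK K v) (n - 1)) (dOp (tauOp K v f)))
            (tauOp K v f)) :=
  ⟨fun _ _ hf _ hx => tauOp_dOp_rhoOp hf.1 hx,
    fun _ _ hf _ hx => tauOp_deltaOp hK hn hf.isAlternating hx,
    fun _ _ hf _ hx => tauOp_deltaOp_dOp_rhoOp hK hn hf hx,
    fun _ _ hf => oinner_deltaOp_dOp_rhoOp hK hn hf⟩

/-- local commutation identities for `τ_v` — on the link of `v`,
`τ_v d ρ_v f = −d_v τ_v f`, `τ_v δ f = −δ_v τ_v f`, `τ_v Δ ρ_v f = Δ_v τ_v f`,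
and consequently `(Δ ρ_v f, ρ_v f) = (Δ_v τ_v f, τ_v f)_v`. -/
theorem tau_commutation_identities (K : Finset (Finset V)) (hK : IsComplex K)
    (n : ℕ) (hn : 1 ≤ n) (hdim : DimLE K n) (hstar : StarProp K n)
    (v : V) (hv : {v} ∈ K) :
    (∀ (j : ℕ) (f : (Fin (j + 2) → V) → ℝ), IsCochain K f →
      ∀ x : Fin (j + 2) → V, IsSimplex (linkK K v) x →
        tauOp K v (dOp (rhoOp v f)) x = - dOp (tauOp K v f) x) ∧
    (∀ (j : ℕ) (f : (Fin (j + 3) → V) → ℝ), IsCochain K f →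
      ∀ x : Fin (j + 1) → V, IsSimplex (linkK K v) x →
        tauOp K v (deltaOp K (wR K n) f) x
          = - deltaOp (linkK K v) (wR (linkK K v) (n - 1)) (tauOp K v f) x) ∧
    (∀ (j : ℕ) (f : (Fin (j + 2) → V) → ℝ), IsCochain K f →
      ∀ x : Fin (j + 1) → V, IsSimplex (linkK K v) x →
        tauOp K v (deltaOp K (wR K n) (dOp (rhoOp v f))) x
          = deltaOp (linkK K v) (wR (linkK K v) (n - 1)) (dOp (tauOp K v f)) x) ∧
    (∀ (j : ℕ) (f : (Fin (j + 2) → V) → ℝ), IsCochain K f →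
      oinner (wR K n) (deltaOp K (wR K n) (dOp (rhoOp v f))) (rhoOp v f)
        = oinner (wR (linkK K v) (n - 1))
            (deltaOp (linkK K v) (wR (linkK K v) (n - 1)) (dOp (tauOp K v f)))
            (tauOp K v f)) :=
  tau_commutation_identities_general K hK n hn v
end
end

section
/- Let X_F be the flag complex associated to a flag F in a finite-dimensional F_q-vector space, with vertex types given by the dimension of the unique new subspace. For any vertex v of X_F and any type α ∈ T with α ≠ Type(v), the sum of w([v,x]) over all vertices x adjacent to v with Type(x) = α equals w(v), where w denotes the number of top-dimensional simplices containing a given simplex. -/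
open scoped Classical

noncomputable section

variable {F : Type*} [Field F] [Fintype F] {V : Type*} [AddCommGroup V] [Module F V]

/-- A flag in `V`: a chain of nonzero proper subspaces. -/
def IsFlag (C : Finset (Submodule F V)) : Prop :=
  IsChain (· ≤ ·) (C : Set (Submodule F V)) ∧ ∀ W ∈ C, W ≠ ⊥ ∧ W ≠ ⊤

/-- The number of complete flags (chains of `n+1` nonzero proper subspaces of the
`(n+2)`-dimensional space `V`, i.e. top-dimensional simplices of a flag complex)
containing a given flag `s`. -/
def flagCount (F : Type*) [Field F] {V : Type*} [AddCommGroup V] [Module F V]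
    (n : ℕ) (s : Finset (Submodule F V)) : ℕ :=
  Nat.card {C : Finset (Submodule F V) // IsFlag C ∧ C.card = n + 1 ∧ s ⊆ C}

section Flags

variable {K : Type*} [Field K] {E : Type*} [AddCommGroup E] [Module K E]

open Finset Module

theorem IsFlag.mono {C s : Finset (Submodule K E)} (hC : IsFlag C) (hs : s ⊆ C) : IsFlag s :=
  ⟨hC.1.mono (by exact_mod_cast hs), fun U hU => hC.2 U (hs hU)⟩

theorem flagCount_eq_zero_of_not_isFlag {n : ℕ} {s : Finset (Submodule K E)} (hs : ¬IsFlag s) :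
    flagCount K n s = 0 := by
  rw [flagCount, Nat.card_eq_zero]
  exact Or.inl ⟨fun C => hs (C.2.1.mono C.2.2.2)⟩

section FiniteDimensional

variable [FiniteDimensional K E]

theorem IsFlag.finrank_injOn {C : Finset (Submodule K E)} (hC : IsFlag C) :
    Set.InjOn (fun U : Submodule K E => finrank K U) C := by
  intro U hU U' hU' hUU'
  by_contra hne
  rcases hC.1 hU hU' hne with hle | hle
  · exact (Submodule.finrank_lt_finrank_of_lt (hle.lt_of_ne hne)).ne hUU'
  · exact (Submodule.finrank_lt_finrank_of_lt (hle.lt_of_ne (Ne.symm hne))).ne' hUU'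

theorem IsFlag.finrank_mem_Ioo {C : Finset (Submodule K E)} (hC : IsFlag C)
    {U : Submodule K E} (hU : U ∈ C) : finrank K U ∈ Ioo 0 (finrank K E) := by
  obtain ⟨hbot, htop⟩ := hC.2 U hU
  have : Nontrivial U := Submodule.nontrivial_iff_ne_bot.2 hbot
  exact mem_Ioo.2 ⟨finrank_pos, Submodule.finrank_lt htop⟩

theorem IsFlag.image_finrank_eq_Ioo {C : Finset (Submodule K E)} (hC : IsFlag C)
    (hcard : #C + 1 = finrank K E) :
    C.image (fun U : Submodule K E => finrank K U) = Ioo 0 (finrank K E) := by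
  refine eq_of_subset_of_card_le ?_ ?_
  · intro a ha
    obtain ⟨U, hU, rfl⟩ := mem_image.1 ha
    exact hC.finrank_mem_Ioo hU
  · rw [card_image_of_injOn hC.finrank_injOn, Nat.card_Ioo]
    omega

theorem IsFlag.card_filter_finrank_eq_one {C : Finset (Submodule K E)} (hC : IsFlag C)
    (hcard : #C + 1 = finrank K E) {α : ℕ} (hα : α ∈ Ioo 0 (finrank K E)) :
    #(C.filter fun U : Submodule K E => finrank K U = α) = 1 := by
  rw [← hC.image_finrank_eq_Ioo hcard] at hα
  obtain ⟨U, hU, rfl⟩ := mem_image.1 hα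
  refine card_eq_one.2 ⟨U, eq_singleton_iff_unique_mem.2 ⟨mem_filter.2 ⟨hU, rfl⟩, ?_⟩⟩
  intro U' hU'
  obtain ⟨hU'C, hdim⟩ := mem_filter.1 hU'
  exact hC.finrank_injOn hU'C hU hdim

end FiniteDimensional

variable [Fintype (Submodule K E)]

def flagsThrough (n : ℕ) (s : Finset (Submodule K E)) : Finset (Finset (Submodule K E)) :=
  {C | IsFlag C ∧ #C = n + 1 ∧ s ⊆ C}

theorem flagCount_eq_card_flagsThrough (n : ℕ) (s : Finset (Submodule K E)) :
    flagCount K n s = #(flagsThrough n s) := by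
  rw [flagCount, flagsThrough, Nat.card_eq_fintype_card, Fintype.card_subtype]

theorem flagsThrough_insert (n : ℕ) (U : Submodule K E) (s : Finset (Submodule K E)) :
    flagsThrough n (insert U s) = {C ∈ flagsThrough n s | U ∈ C} := by
  ext C
  simp only [flagsThrough, mem_filter, mem_univ, true_and, insert_subset_iff]
  tauto

/-- Double counting of the pairs `(U, C)` with `C ⊇ s` a maximal flag and `U ∈ C` of dimension
`α`: each such `C` contains exactly one such `U`. -/
theorem sum_flagCount_insert_of_finrank_eq {n α : ℕ} (hE : finrank K E = n + 2)
    (s : Finset (Submodule K E)) (hα : α ∈ Ioo 0 (n + 2)) :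
    ∑ U ∈ univ.filter (fun U : Submodule K E => finrank K U = α), flagCount K n (insert U s) =
      flagCount K n s := by
  simp only [flagCount_eq_card_flagsThrough, flagsThrough_insert]
  have : FiniteDimensional K E := Module.finite_of_finrank_eq_succ hE
  rw [← hE] at hα
  calc ∑ U ∈ univ.filter (fun U : Submodule K E => finrank K U = α),
          #{C ∈ flagsThrough n s | U ∈ C}
      = ∑ C ∈ flagsThrough n s, #(C.filter fun U : Submodule K E => finrank K U = α) := by
        refine (sum_card_bipartiteAbove_eq_sum_card_bipartiteBelow (r := (· ∈ ·))).trans ?_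
        refine sum_congr rfl fun C _ => congrArg card ?_
        ext U
        simp [bipartiteBelow, and_comm]
    _ = ∑ C ∈ flagsThrough n s, 1 := by
        refine sum_congr rfl fun C hC => ?_
        obtain ⟨hCflag, hCcard, -⟩ := (mem_filter.1 hC).2
        exact hCflag.card_filter_finrank_eq_one (by omega) hα
    _ = #(flagsThrough n s) := (card_eq_sum_ones _).symm

end Flags

theorem type_weight_sum_general (n : ℕ) (hV : Module.finrank F V = n + 2)
    [Fintype (Submodule F V)]
    (Fl : Finset (Submodule F V))
    (W : Submodule F V)
    (α : ℕ) (hα1 : 1 ≤ α) (hα2 : α ≤ n + 1)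
    (hαF : ∀ U ∈ Fl, Module.finrank F ↥U ≠ α) (hαW : Module.finrank F ↥W ≠ α) :
    ∑ U : Submodule F V,
      (if Module.finrank F ↥U = α ∧ U ∉ insert W Fl ∧ IsFlag (insert U (insert W Fl))
        then flagCount F n (insert U (insert W Fl)) else 0)
      = flagCount F n (insert W Fl) := by
  have hnew : ∀ U : Submodule F V, Module.finrank F U = α → U ∉ insert W Fl := by
    intro U hU hmem
    rcases Finset.mem_insert.1 hmem with rfl | hmem
    exacts [hαW hU, hαF U hmem hU]
  calc _ = ∑ U ∈ Finset.univ.filter (fun U : Submodule F V => Module.finrank F U = α),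
           flagCount F n (insert U (insert W Fl)) := by
        rw [Finset.sum_filter]
        refine Finset.sum_congr rfl fun U _ => ?_
        by_cases hU : Module.finrank F U = α
        · by_cases hflag : IsFlag (insert U (insert W Fl))
          · simp [hU, hnew U hU, hflag]
          · simp [hU, hflag, flagCount_eq_zero_of_not_isFlag hflag]
        · simp [hU]
    _ = _ := sum_flagCount_insert_of_finrank_eq hV _ (Finset.mem_Ioo.2 ⟨hα1, by omega⟩)

/-- in the flag complex `X_F`, for a vertex `v = F ∪ {W}` and a
type `α ≠ Type(v)`, the sum of `w([v,x])` over all vertices `x` of type `α`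
adjacent to `v` equals `w(v)`. -/
theorem type_weight_sum (n : ℕ) (hV : Module.finrank F V = n + 2)
    [Fintype (Submodule F V)]
    (Fl : Finset (Submodule F V)) (hF : IsFlag Fl)
    (W : Submodule F V) (hW : W ∉ Fl) (hvert : IsFlag (insert W Fl))
    (hdim : Fl.card + 1 ≤ n)
    (α : ℕ) (hα1 : 1 ≤ α) (hα2 : α ≤ n + 1)
    (hαF : ∀ U ∈ Fl, Module.finrank F ↥U ≠ α) (hαW : Module.finrank F ↥W ≠ α) :
    ∑ U : Submodule F V,
      (if Module.finrank F ↥U = α ∧ U ∉ insert W Fl ∧ IsFlag (insert U (insert W Fl))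
        then flagCount F n (insert U (insert W Fl)) else 0)
      = flagCount F n (insert W Fl) :=
  type_weight_sum_general n hV Fl W α hα1 hα2 hαF hαW

end
end
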